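/- arXiv:math/0609619 — 3 statements merged into one kernel-verified Lean document; each statement's English description precedes it below -/
import Mathlib

section
/- For every natural number n, L(2n+2,χ) = π^{2n+2} · (-4)^n / (√3 · (2n+1)! · (n+1)) · (B_{2n+2}(1/12) − B_{2n+2}(5/12)), where χ is the primitive character of conductor 12 and B_k denotes the k-th Bernoulli polynomial. -/
open Real

def chi12 (n : ℕ) : ℤ :=
  if n % 12 = 1 ∨ n % 12 = 11 then 1
  else if n % 12 = 5 ∨ n % 12 = 7 then -1
  else 0

lemma cos_red (j : ℕ) : Real.cos (2 * π * j / 12) = Real.cos (2 * π * ((j % 12 : ℕ) : ℝ) / 12) := by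
  conv_lhs => rw [← Nat.div_add_mod j 12]
  push_cast
  rw [show 2 * π * (12 * (↑(j / 12) : ℝ) + ↑(j % 12)) / 12
      = 2 * π * ↑(j % 12) / 12 + (↑(j / 12) : ℝ) * (2 * π) by ring]
  exact Real.cos_add_nat_mul_two_pi _ _

lemma key (m : ℕ) :
    Real.cos (2 * π * m * (1 / 12)) - Real.cos (2 * π * m * (5 / 12))
      = Real.sqrt 3 * (chi12 m : ℝ) := by
  have h1 : 2 * π * (m : ℝ) * (1 / 12) = 2 * π * m / 12 := by ring
  have h5 : 2 * π * (m : ℝ) * (5 / 12) = 2 * π * (((5 * m : ℕ)) : ℝ) / 12 := by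
    push_cast; ring
  rw [h1, h5, cos_red m, cos_red (5 * m)]
  have h5m : (5 * m) % 12 = (5 * (m % 12)) % 12 := by
    conv_lhs => rw [← Nat.div_add_mod m 12]
    omega
  have hsq : Real.sqrt 3 = 2 * (Real.sqrt 3 / 2) := by ring
  have hr : m % 12 = 0 ∨ m % 12 = 1 ∨ m % 12 = 2 ∨ m % 12 = 3 ∨ m % 12 = 4 ∨
      m % 12 = 5 ∨ m % 12 = 6 ∨ m % 12 = 7 ∨ m % 12 = 8 ∨ m % 12 = 9 ∨
      m % 12 = 10 ∨ m % 12 = 11 := by omega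
  have c0 : Real.cos (2 * π * (0 : ℕ) / 12) = 1 := by norm_num
  have c1 : Real.cos (2 * π * (1 : ℕ) / 12) = Real.sqrt 3 / 2 := by
    rw [show 2 * π * ((1 : ℕ) : ℝ) / 12 = π / 6 by push_cast; ring]
    exact Real.cos_pi_div_six
  have c2 : Real.cos (2 * π * (2 : ℕ) / 12) = 1 / 2 := by
    rw [show 2 * π * ((2 : ℕ) : ℝ) / 12 = π / 3 by push_cast; ring]
    exact Real.cos_pi_div_three
  have c3 : Real.cos (2 * π * (3 : ℕ) / 12) = 0 := by
    rw [show 2 * π * ((3 : ℕ) : ℝ) / 12 = π / 2 by push_cast; ring]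
    exact Real.cos_pi_div_two
  have c4 : Real.cos (2 * π * (4 : ℕ) / 12) = -(1 / 2) := by
    rw [show 2 * π * ((4 : ℕ) : ℝ) / 12 = π - π / 3 by push_cast; ring,
      Real.cos_pi_sub, Real.cos_pi_div_three]
  have c5 : Real.cos (2 * π * (5 : ℕ) / 12) = -(Real.sqrt 3 / 2) := by
    rw [show 2 * π * ((5 : ℕ) : ℝ) / 12 = π - π / 6 by push_cast; ring,
      Real.cos_pi_sub, Real.cos_pi_div_six]
  have c6 : Real.cos (2 * π * (6 : ℕ) / 12) = -1 := by
    rw [show 2 * π * ((6 : ℕ) : ℝ) / 12 = π by push_cast; ring]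
    exact Real.cos_pi
  have c7 : Real.cos (2 * π * (7 : ℕ) / 12) = -(Real.sqrt 3 / 2) := by
    rw [show 2 * π * ((7 : ℕ) : ℝ) / 12 = 2 * π - (π - π / 6) by push_cast; ring,
      Real.cos_two_pi_sub, Real.cos_pi_sub, Real.cos_pi_div_six]
  have c8 : Real.cos (2 * π * (8 : ℕ) / 12) = -(1 / 2) := by
    rw [show 2 * π * ((8 : ℕ) : ℝ) / 12 = 2 * π - (π - π / 3) by push_cast; ring,
      Real.cos_two_pi_sub, Real.cos_pi_sub, Real.cos_pi_div_three]
  have c9 : Real.cos (2 * π * (9 : ℕ) / 12) = 0 := by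
    rw [show 2 * π * ((9 : ℕ) : ℝ) / 12 = 2 * π - π / 2 by push_cast; ring,
      Real.cos_two_pi_sub, Real.cos_pi_div_two]
  have c10 : Real.cos (2 * π * (10 : ℕ) / 12) = 1 / 2 := by
    rw [show 2 * π * ((10 : ℕ) : ℝ) / 12 = 2 * π - π / 3 by push_cast; ring,
      Real.cos_two_pi_sub, Real.cos_pi_div_three]
  have c11 : Real.cos (2 * π * (11 : ℕ) / 12) = Real.sqrt 3 / 2 := by
    rw [show 2 * π * ((11 : ℕ) : ℝ) / 12 = 2 * π - π / 6 by push_cast; ring,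
      Real.cos_two_pi_sub, Real.cos_pi_div_six]
  rcases hr with h | h | h | h | h | h | h | h | h | h | h | h <;>
    · rw [h5m, h]
      simp only [Nat.reduceMul, Nat.reduceMod]
      simp only [c0, c1, c2, c3, c4, c5, c6, c7, c8, c9, c10, c11]
      simp only [chi12, h]
      norm_num
      try ring

lemma eval_map_rat (p : Polynomial ℚ) (q : ℚ) :
    (Polynomial.map (algebraMap ℚ ℝ) p).eval (q : ℝ) = ((p.eval q : ℚ) : ℝ) := by
  rw [Polynomial.eval_map, show ((q : ℝ)) = algebraMap ℚ ℝ q from (eq_ratCast _ q).symm,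
    Polynomial.eval₂_at_apply, eq_ratCast]

theorem L_even_values (n : ℕ) :
    HasSum (fun m : ℕ => (chi12 (m + 1) : ℝ) / ((m : ℝ) + 1) ^ (2 * n + 2))
      (π ^ (2 * n + 2) * (-4 : ℝ) ^ n /
        (Real.sqrt 3 * (Nat.factorial (2 * n + 1)) * ((n : ℝ) + 1)) *
        (((Polynomial.bernoulli (2 * n + 2)).eval ((1 : ℚ) / 12) : ℚ) -
          ((Polynomial.bernoulli (2 * n + 2)).eval ((5 : ℚ) / 12) : ℚ))) := by
  have hk : n + 1 ≠ 0 := Nat.succ_ne_zero n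
  have H1 := hasSum_one_div_nat_pow_mul_cos (k := n + 1) hk
    (x := 1 / 12) ⟨by norm_num, by norm_num⟩
  have H5 := hasSum_one_div_nat_pow_mul_cos (k := n + 1) hk
    (x := 5 / 12) ⟨by norm_num, by norm_num⟩
  have H := (H1.sub H5).div_const (Real.sqrt 3)
  set T : ℝ := (π ^ (2 * n + 2) * (-4 : ℝ) ^ n /
        (Real.sqrt 3 * (Nat.factorial (2 * n + 1)) * ((n : ℝ) + 1)) *
        (((Polynomial.bernoulli (2 * n + 2)).eval ((1 : ℚ) / 12) : ℚ) -
          ((Polynomial.bernoulli (2 * n + 2)).eval ((5 : ℚ) / 12) : ℚ))) with hT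
  have hg : HasSum (fun m : ℕ => (chi12 m : ℝ) / (m : ℝ) ^ (2 * n + 2)) T := by
    have hs3 : Real.sqrt 3 ≠ 0 := by positivity
    convert H using 1
    · rfl
    · funext m
      rw [show (1 / (m : ℝ) ^ (2 * (n + 1)) * Real.cos (2 * π * m * (1 / 12))
            - 1 / (m : ℝ) ^ (2 * (n + 1)) * Real.cos (2 * π * m * (5 / 12)))
          = (Real.cos (2 * π * m * (1 / 12)) - Real.cos (2 * π * m * (5 / 12)))
            * (1 / (m : ℝ) ^ (2 * (n + 1))) from by ring, key m,
        show Real.sqrt 3 * (chi12 m : ℝ) * (1 / (m : ℝ) ^ (2 * (n + 1)))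
          = Real.sqrt 3 * ((chi12 m : ℝ) / (m : ℝ) ^ (2 * (n + 1))) from by ring,
        mul_div_cancel_left₀ _ hs3, show 2 * (n + 1) = 2 * n + 2 from by ring]
    · -- constants
      have hfac : ((2 * n + 2).factorial : ℝ)
          = (2 * (n : ℝ) + 2) * ((2 * n + 1).factorial : ℝ) := by
        rw [show 2 * n + 2 = (2 * n + 1) + 1 by ring, Nat.factorial_succ]
        push_cast; ring
      have h1 : ((-1 : ℝ)) ^ (n + 1 + 1) = (-1 : ℝ) ^ n := by
        rw [pow_succ, pow_succ]; ring
      have h2 : ((2 : ℝ) * π) ^ (2 * n + 2) = 4 ^ n * 4 * π ^ (2 * n + 2) := by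
        rw [mul_pow]
        congr 1
        rw [pow_add, pow_mul]
        norm_num
      have h3 : ((-4 : ℝ)) ^ n = (-1 : ℝ) ^ n * 4 ^ n := by
        rw [← neg_one_mul (4 : ℝ), mul_pow]
      have he1 := eval_map_rat (Polynomial.bernoulli (2 * (n + 1))) (1 / 12)
      have he5 := eval_map_rat (Polynomial.bernoulli (2 * (n + 1))) (5 / 12)
      have hc1 : (((1 : ℚ) / 12 : ℚ) : ℝ) = 1 / 12 := by norm_num
      have hc5 : (((5 : ℚ) / 12 : ℚ) : ℝ) = 5 / 12 := by norm_num
      rw [hc1] at he1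
      rw [hc5] at he5
      rw [hT]
      simp only [show 2 * (n + 1) = 2 * n + 2 from by ring] at he1 he5 ⊢
      rw [he1, he5, h1, h2, hfac, h3]
      have hfacne : ((2 * n + 1).factorial : ℝ) ≠ 0 := by positivity
      have hn1 : ((n : ℝ) + 1) ≠ 0 := by positivity
      have hn2 : (2 * (n : ℝ) + 2) ≠ 0 := by positivity
      field_simp
      ring
  have := (hasSum_nat_add_iff' (f := fun m : ℕ => (chi12 m : ℝ) / (m : ℝ) ^ (2 * n + 2)) 1).mpr hg
  simp only [Finset.range_one, Finset.sum_singleton, Nat.cast_zero] at this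
  have h0 : (chi12 0 : ℝ) / (0 : ℝ) ^ (2 * n + 2) = 0 := by simp [chi12]
  rw [h0, sub_zero] at this
  convert this using 2 with m
  · rfl
  push_cast
  ring
end

section
/- The Dedekind eta function satisfies the pentagonal-number/character identity: for complex z with Im(z) > 0, e^{πiz/12} · ∏_{n≥1}(1 − e^{2πinz}) = ∑_{n≥1} χ(n) e^{πin²z/12}, where χ is the primitive character of conductor 12. -/
open Finset Filter Topology

noncomputable def aa (x : ℂ) (n i : ℕ) : ℂ :=
  (-1) ^ i * x ^ (i * (i + 1) / 2 + n * i) * ∏ j ∈ Finset.Ico (i + 1) (n + 1), (1 - x ^ j)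

noncomputable def uu (x : ℂ) (n i : ℕ) : ℂ :=
  (-1) ^ i * x ^ (i * (i + 1) / 2 + n * i) * ∏ j ∈ Finset.Ico i (n + 1), (1 - x ^ j)

lemma uu_succ_sub (x : ℂ) (n i : ℕ) (hi : i ≤ n) :
    (1 - x ^ (n + 1)) * (x ^ i * aa x n i) - aa x n i = uu x n (i + 1) - uu x n i := by
  unfold aa uu
  have h1 : ∏ j ∈ Finset.Ico i (n + 1), (1 - x ^ j)
      = (1 - x ^ i) * ∏ j ∈ Finset.Ico (i + 1) (n + 1), (1 - x ^ j) :=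
    Finset.prod_eq_prod_Ico_succ_bot (by omega) _
  have h2 : (i + 1) * (i + 1 + 1) / 2 + n * (i + 1) = (i * (i + 1) / 2 + n * i) + (i + 1 + n) := by
    have e1 : (i + 1) * (i + 1 + 1) = i * (i + 1) + 2 * (i + 1) := by ring
    have e2 : n * (i + 1) = n * i + n := by ring
    have e3 : i * (i + 1) % 2 = 0 := Nat.even_iff.mp (Nat.even_mul_succ_self i)
    omega
  rw [h1, h2, pow_add]
  ring

lemma telescope (x : ℂ) (n : ℕ) :
    (1 - x ^ (n + 1)) * ∑ i ∈ range (n + 1), x ^ i * aa x n i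
      = (∑ i ∈ range (n + 1), aa x n i) + (-1) ^ (n + 1) * x ^ ((n + 1) * (n + 2) / 2 + n * (n + 1)) := by
  have key : ∑ i ∈ range (n + 1), ((1 - x ^ (n + 1)) * (x ^ i * aa x n i) - aa x n i)
      = uu x n (n + 1) - uu x n 0 := by
    rw [← Finset.sum_range_sub (uu x n)]
    refine Finset.sum_congr rfl fun i hi => ?_
    exact uu_succ_sub x n i (by simpa using Nat.lt_succ_iff.mp (Finset.mem_range.mp hi))
  have hu0 : uu x n 0 = 0 := by
    exact mul_eq_zero_of_right _ (Finset.prod_eq_zero (Finset.mem_Ico.mpr ⟨le_rfl, by omega⟩) (by simp))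
  have hun : uu x n (n + 1) = (-1) ^ (n + 1) * x ^ ((n + 1) * (n + 2) / 2 + n * (n + 1)) := by
    unfold uu
    rw [Finset.Ico_self, Finset.prod_empty, mul_one]
  rw [Finset.sum_sub_distrib, ← Finset.mul_sum] at key
  rw [hu0, hun, sub_zero] at key
  linear_combination key

lemma shanks (x : ℂ) (n : ℕ) :
    ∑ i ∈ range (n + 1), aa x n i
      = 1 + ∑ k ∈ range n, (-1) ^ (k + 1) *
          (x ^ ((k + 1) * (3 * k + 4) / 2) + x ^ ((k + 1) * (3 * k + 2) / 2)) := by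
  induction n with
  | zero => simp [aa]
  | succ n ih =>
    have step : ∀ i ∈ range (n + 1), aa x (n + 1) i = (1 - x ^ (n + 1)) * (x ^ i * aa x n i) := by
      intro i hi
      have hi' : i ≤ n := Nat.lt_succ_iff.mp (Finset.mem_range.mp hi)
      unfold aa
      rw [Finset.prod_Ico_succ_top (by omega)]
      have h2 : i * (i + 1) / 2 + (n + 1) * i = (i * (i + 1) / 2 + n * i) + i := by ring
      rw [h2, pow_add]
      ring
    rw [Finset.sum_range_succ, Finset.sum_congr rfl step, ← Finset.mul_sum, telescope x n, ih]
    have hlast : aa x (n + 1) (n + 1)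
        = (-1) ^ (n + 1) * x ^ ((n + 1) * (3 * n + 4) / 2) := by
      unfold aa
      rw [Finset.Ico_self, Finset.prod_empty, mul_one]
      congr 2
      have e1 : (n + 1) * (3 * n + 4) = (n + 1) * (n + 1 + 1) + 2 * ((n + 1) * (n + 1)) := by ring
      omega
    have hpent : (n + 1) * (n + 2) / 2 + n * (n + 1) = (n + 1) * (3 * n + 2) / 2 := by
      have e1 : (n + 1) * (3 * n + 2) = (n + 1) * (n + 2) + 2 * (n * (n + 1)) := by ring
      omega
    rw [hlast, hpent, Finset.sum_range_succ]
    ring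

section
variable {x : ℂ}

lemma prod_bound (hx : ‖x‖ < 1) (s : Finset ℕ) :
    ‖∏ j ∈ s, (1 - x ^ j)‖ ≤ Real.exp ((1 - ‖x‖)⁻¹) := by
  have r0 : (0:ℝ) ≤ ‖x‖ := norm_nonneg x
  calc ‖∏ j ∈ s, (1 - x ^ j)‖ = ∏ j ∈ s, ‖1 - x ^ j‖ := by
        rw [norm_prod]
    _ ≤ ∏ j ∈ s, Real.exp (‖x‖ ^ j) := by
        refine Finset.prod_le_prod (fun j _ => norm_nonneg _) (fun j _ => ?_)
        calc ‖1 - x ^ j‖ ≤ ‖(1:ℂ)‖ + ‖x ^ j‖ := norm_sub_le _ _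
          _ = ‖x‖ ^ j + 1 := by rw [norm_one, norm_pow]; ring
          _ ≤ Real.exp (‖x‖ ^ j) := Real.add_one_le_exp _
    _ = Real.exp (∑ j ∈ s, ‖x‖ ^ j) := (Real.exp_sum s _).symm
    _ ≤ Real.exp ((1 - ‖x‖)⁻¹) := by
        apply Real.exp_le_exp.mpr
        calc ∑ j ∈ s, ‖x‖ ^ j ≤ ∑' j, ‖x‖ ^ j :=
              Summable.sum_le_tsum s (fun j _ => pow_nonneg r0 j) (summable_geometric_of_lt_one r0 hx)
          _ = (1 - ‖x‖)⁻¹ := tsum_geometric_of_lt_one r0 hx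

lemma one_sub_pow_ne (hx : ‖x‖ < 1) (j : ℕ) : (1 : ℂ) - x ^ (j + 1) ≠ 0 := by
  intro h
  have : ‖x ^ (j + 1)‖ = 1 := by
    have : (1 : ℂ) = x ^ (j+1) := by linear_combination h
    rw [← this, norm_one]
  rw [norm_pow] at this
  have h2 := pow_lt_one₀ (norm_nonneg x) hx (Nat.succ_ne_zero j)
  rw [Nat.succ_eq_add_one] at h2
  linarith

lemma summable_log_one_sub (hx : ‖x‖ < 1) :
    Summable (fun j : ℕ => Complex.log (1 - x ^ (j + 1))) := by
  apply Summable.of_norm_bounded_eventually_nat (g := fun j => 3/2 * ‖x‖ ^ (j+1))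
  · have := (summable_geometric_of_lt_one (norm_nonneg x) hx).mul_left (3/2 * ‖x‖)
    refine this.congr fun j => ?_
    rw [pow_succ']
    ring
  · have h0 : Tendsto (fun j : ℕ => ‖x‖ ^ (j+1)) atTop (nhds 0) :=
      (tendsto_pow_atTop_nhds_zero_of_lt_one (norm_nonneg x) hx).comp
        (tendsto_add_atTop_nat 1)
    have hev : ∀ᶠ j : ℕ in atTop, ‖x‖ ^ (j + 1) ≤ 1/2 :=
      Filter.Tendsto.eventually_le_const (by norm_num : (0:ℝ) < 1/2) h0
    filter_upwards [hev] with j hj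
    have := Complex.norm_log_one_add_half_le_self (z := -(x ^ (j+1)))
      (by rwa [norm_neg, norm_pow])
    rw [← sub_eq_add_neg] at this
    rwa [norm_neg, norm_pow] at this

lemma multipliable_one_sub (hx : ‖x‖ < 1) :
    Multipliable (fun j : ℕ => (1 : ℂ) - x ^ (j + 1)) :=
  Complex.multipliable_of_summable_log (summable_log_one_sub hx)
end

section
variable {x : ℂ}

lemma aa_zero (x : ℂ) (n : ℕ) : aa x n 0 = ∏ i ∈ range n, (1 - x ^ (i + 1)) := by
  unfold aa
  norm_num
  rw [Finset.prod_Ico_eq_prod_range]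
  simp only [Nat.add_sub_cancel]
  exact Finset.prod_congr rfl fun i _ => by rw [add_comm]

lemma err_bound (hx : ‖x‖ < 1) (n : ℕ) :
    ‖∑ i ∈ range n, aa x n (i + 1)‖
      ≤ Real.exp ((1 - ‖x‖)⁻¹) * (1 - ‖x‖)⁻¹ * ‖x‖ ^ (n + 1) := by
  set r := ‖x‖ with hr
  have r0 : (0:ℝ) ≤ r := norm_nonneg x
  set C := Real.exp ((1 - r)⁻¹) with hC
  have hterm : ∀ i ∈ range n, ‖aa x n (i + 1)‖ ≤ C * r ^ (n + 1) * r ^ i := by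
    intro i _
    unfold aa
    rw [norm_mul, norm_mul, norm_pow, norm_pow, norm_neg, norm_one, one_pow, one_mul]
    have h1 : ‖∏ j ∈ Finset.Ico (i + 1 + 1) (n + 1), (1 - x ^ j)‖ ≤ C := prod_bound hx _
    have h2 : r ^ ((i + 1) * (i + 1 + 1) / 2 + n * (i + 1)) ≤ r ^ (n + 1 + i) := by
      apply pow_le_pow_of_le_one r0 hx.le
      have e1 : (i + 1) * (i + 1 + 1) = i * (i + 1) + 2 * (i + 1) := by ring
      have e2 : n * (i + 1) = n * i + n := by ring
      omega
    calc r ^ ((i + 1) * (i + 1 + 1) / 2 + n * (i + 1)) * ‖∏ j ∈ Finset.Ico (i + 1 + 1) (n + 1), (1 - x ^ j)‖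
        ≤ r ^ (n + 1 + i) * C := by
          apply mul_le_mul h2 h1 (norm_nonneg _) (pow_nonneg r0 _)
      _ = C * r ^ (n + 1) * r ^ i := by rw [pow_add]; ring
  calc ‖∑ i ∈ range n, aa x n (i + 1)‖ ≤ ∑ i ∈ range n, ‖aa x n (i + 1)‖ := norm_sum_le _ _
    _ ≤ ∑ i ∈ range n, C * r ^ (n + 1) * r ^ i := Finset.sum_le_sum hterm
    _ = C * r ^ (n + 1) * ∑ i ∈ range n, r ^ i := by rw [Finset.mul_sum]
    _ ≤ C * r ^ (n + 1) * (1 - r)⁻¹ := by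
        apply mul_le_mul_of_nonneg_left _ (by positivity)
        calc ∑ i ∈ range n, r ^ i ≤ ∑' i, r ^ i :=
              Summable.sum_le_tsum _ (fun i _ => pow_nonneg r0 i) (summable_geometric_of_lt_one r0 hx)
          _ = (1 - r)⁻¹ := tsum_geometric_of_lt_one r0 hx
    _ = C * (1 - r)⁻¹ * r ^ (n + 1) := by ring

lemma tendsto_sum_aa (hx : ‖x‖ < 1) :
    Tendsto (fun n => ∑ i ∈ range (n + 1), aa x n i) atTop
      (𝓝 (∏' j : ℕ, (1 - x ^ (j + 1)))) := by
  have r0 : (0:ℝ) ≤ ‖x‖ := norm_nonneg x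
  have hsplit : ∀ n, ∑ i ∈ range (n + 1), aa x n i
      = (∏ i ∈ range n, (1 - x ^ (i + 1))) + ∑ i ∈ range n, aa x n (i + 1) := by
    intro n
    rw [Finset.sum_range_succ', aa_zero]
    ring
  have hP : Tendsto (fun n => ∏ i ∈ range n, (1 - x ^ (i + 1))) atTop
      (𝓝 (∏' j : ℕ, (1 - x ^ (j + 1)))) :=
    HasProd.tendsto_prod_nat (multipliable_one_sub hx).hasProd
  have hE : Tendsto (fun n => ∑ i ∈ range n, aa x n (i + 1)) atTop (𝓝 0) := by
    rw [tendsto_zero_iff_norm_tendsto_zero]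
    apply squeeze_zero (fun n => norm_nonneg _) (err_bound hx)
    have := ((tendsto_pow_atTop_nhds_zero_of_lt_one r0 hx).comp
      (tendsto_add_atTop_nat 1)).const_mul (Real.exp ((1 - ‖x‖)⁻¹) * (1 - ‖x‖)⁻¹)
    simpa [Function.comp] using this
  have := hP.add hE
  rw [add_zero] at this
  exact this.congr fun n => (hsplit n).symm

lemma pentagonal_tendsto (hx : ‖x‖ < 1) :
    Tendsto (fun n => 1 + ∑ k ∈ range n, (-1 : ℂ) ^ (k + 1) *
        (x ^ ((k + 1) * (3 * k + 4) / 2) + x ^ ((k + 1) * (3 * k + 2) / 2))) atTop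
      (𝓝 (∏' j : ℕ, (1 - x ^ (j + 1)))) :=
  (tendsto_sum_aa hx).congr fun n => shanks x n
end

open Finset Filter Topology Complex Real

lemma chi12_vanish {m : ℕ} (h : m % 6 = 0 ∨ m % 6 = 2 ∨ m % 6 = 3 ∨ m % 6 = 4) :
    chi12 m = 0 := by
  unfold chi12
  split_ifs with h1 h2
  · omega
  · omega
  · rfl

lemma chi12_6_5 (n : ℕ) : chi12 (6 * n + 5) = (-1 : ℤ) ^ (n + 1) := by
  obtain ⟨m, rfl⟩ | ⟨m, rfl⟩ := Nat.even_or_odd n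
  · unfold chi12
    rw [if_neg (by omega), if_pos (by omega), pow_succ, Even.neg_one_pow ⟨m, rfl⟩, one_mul]
  · unfold chi12
    rw [if_pos (by omega), Even.neg_one_pow ⟨m + 1, by ring⟩]

lemma chi12_6_7 (n : ℕ) : chi12 (6 * n + 7) = (-1 : ℤ) ^ (n + 1) := by
  obtain ⟨m, rfl⟩ | ⟨m, rfl⟩ := Nat.even_or_odd n
  · unfold chi12
    rw [if_neg (by omega), if_pos (by omega), pow_succ, Even.neg_one_pow ⟨m, rfl⟩, one_mul]
  · unfold chi12
    rw [if_pos (by omega), Even.neg_one_pow ⟨m + 1, by ring⟩]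

lemma chi12_norm_le (m : ℕ) : ‖((chi12 m : ℤ) : ℂ)‖ ≤ 1 := by
  unfold chi12
  split_ifs <;> simp

lemma finite_reindex (w : ℂ) (n : ℕ) :
    ∑ m ∈ range (6 * n + 2), ((chi12 (m + 1) : ℤ) : ℂ) * w ^ ((m + 1) ^ 2)
      = w * (1 + ∑ k ∈ range n, (-1 : ℂ) ^ (k + 1) *
          ((w ^ 24) ^ ((k + 1) * (3 * k + 4) / 2) + (w ^ 24) ^ ((k + 1) * (3 * k + 2) / 2))) := by
  induction n with
  | zero =>
    norm_num [Finset.sum_range_succ]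
    rw [show chi12 1 = 1 by rfl, show chi12 2 = 0 by rfl]
    norm_num
  | succ n ih =>
    rw [show 6 * (n + 1) + 2 = (6 * n + 2) + 1 + 1 + 1 + 1 + 1 + 1 by ring]
    rw [Finset.sum_range_succ, Finset.sum_range_succ, Finset.sum_range_succ,
      Finset.sum_range_succ, Finset.sum_range_succ, Finset.sum_range_succ, ih]
    have z1 : chi12 (6 * n + 2 + 1) = 0 := chi12_vanish (by omega)
    have z2 : chi12 (6 * n + 2 + 1 + 1) = 0 := chi12_vanish (by omega)
    have z3 : chi12 (6 * n + 2 + 1 + 1 + 1 + 1) = 0 := chi12_vanish (by omega)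
    have z4 : chi12 (6 * n + 2 + 1 + 1 + 1 + 1 + 1 + 1) = 0 := chi12_vanish (by omega)
    have v5 : chi12 (6 * n + 2 + 1 + 1 + 1) = (-1 : ℤ) ^ (n + 1) := by
      rw [show 6 * n + 2 + 1 + 1 + 1 = 6 * n + 5 by ring, chi12_6_5]
    have v7 : chi12 (6 * n + 2 + 1 + 1 + 1 + 1 + 1) = (-1 : ℤ) ^ (n + 1) := by
      rw [show 6 * n + 2 + 1 + 1 + 1 + 1 + 1 = 6 * n + 7 by ring, chi12_6_7]
    rw [z1, z2, z3, z4, v5, v7]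
    have d5 : 2 ∣ (n + 1) * (3 * n + 2) := by
      rcases Nat.even_or_odd n with ⟨m, rfl⟩ | ⟨m, rfl⟩
      · exact Dvd.dvd.mul_left ⟨3 * m + 1, by ring⟩ _
      · exact Dvd.dvd.mul_right ⟨m + 1, by ring⟩ _
    have d7 : 2 ∣ (n + 1) * (3 * n + 4) := by
      rcases Nat.even_or_odd n with ⟨m, rfl⟩ | ⟨m, rfl⟩
      · exact Dvd.dvd.mul_left ⟨3 * m + 2, by ring⟩ _
      · exact Dvd.dvd.mul_right ⟨m + 1, by ring⟩ _
    have p5 : w ^ ((6 * n + 2 + 1 + 1 + 1) ^ 2)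
        = (w ^ 24) ^ ((n + 1) * (3 * n + 2) / 2) * w := by
      rw [← pow_mul, ← pow_succ]
      congr 1
      have e1 : (n + 1) * (3 * n + 2) = 3 * (n * n) + 5 * n + 2 := by ring
      have e2 : (6 * n + 2 + 1 + 1 + 1) ^ 2 = 36 * (n * n) + 60 * n + 25 := by ring
      omega
    have p7 : w ^ ((6 * n + 2 + 1 + 1 + 1 + 1 + 1) ^ 2)
        = (w ^ 24) ^ ((n + 1) * (3 * n + 4) / 2) * w := by
      rw [← pow_mul, ← pow_succ]
      congr 1
      have e1 : (n + 1) * (3 * n + 4) = 3 * (n * n) + 7 * n + 4 := by ring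
      have e2 : (6 * n + 2 + 1 + 1 + 1 + 1 + 1) ^ 2 = 36 * (n * n) + 84 * n + 49 := by ring
      omega
    rw [p5, p7, Finset.sum_range_succ]
    push_cast
    ring

open Complex Real

theorem eta_character_identity (z : ℂ) (hz : 0 < z.im) :
    Complex.exp (Real.pi * Complex.I * z / 12) *
      (∏' n : ℕ, (1 - Complex.exp (2 * Real.pi * Complex.I * ((n : ℂ) + 1) * z)))
    = ∑' n : ℕ, (chi12 (n + 1) : ℂ) *
        Complex.exp (Real.pi * Complex.I * ((n : ℂ) + 1) ^ 2 * z / 12) := by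
  set w : ℂ := Complex.exp (Real.pi * Complex.I * z / 12) with hw
  -- norm of w
  have hw_norm : ‖w‖ < 1 := by
    rw [hw, Complex.norm_exp]
    rw [Real.exp_lt_one_iff]
    have hre : ((Real.pi : ℂ) * Complex.I * z / 12).re = -(Real.pi * z.im / 12) := by
      have : (Real.pi : ℂ) * Complex.I * z / 12 = ((Real.pi / 12 : ℝ) : ℂ) * (Complex.I * z) := by
        push_cast; ring
      rw [this]
      simp [Complex.mul_re]
      ring
    rw [hre]
    have := Real.pi_pos
    nlinarith
  have hx_norm : ‖w ^ 24‖ < 1 := by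
    rw [norm_pow]
    exact pow_lt_one₀ (norm_nonneg w) hw_norm (by norm_num)
  -- rewrite the product
  have hprod : (∏' n : ℕ, (1 - Complex.exp (2 * Real.pi * Complex.I * ((n : ℂ) + 1) * z)))
      = ∏' n : ℕ, (1 - (w ^ 24) ^ (n + 1)) := by
    refine tprod_congr fun n => ?_
    congr 1
    rw [hw, ← Complex.exp_nat_mul, ← Complex.exp_nat_mul]
    congr 1
    push_cast
    ring
  -- rewrite the sum
  have hsum : (∑' n : ℕ, (chi12 (n + 1) : ℂ) *
        Complex.exp (Real.pi * Complex.I * ((n : ℂ) + 1) ^ 2 * z / 12))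
      = ∑' n : ℕ, ((chi12 (n + 1) : ℤ) : ℂ) * w ^ ((n + 1) ^ 2) := by
    refine tsum_congr fun n => ?_
    congr 1
    rw [hw, ← Complex.exp_nat_mul]
    congr 1
    push_cast
    ring
  rw [hprod, hsum]
  -- summability of the character series
  have hF : Summable (fun m : ℕ => ((chi12 (m + 1) : ℤ) : ℂ) * w ^ ((m + 1) ^ 2)) := by
    apply Summable.of_norm_bounded (g := fun m => ‖w‖ ^ m)
      (summable_geometric_of_lt_one (norm_nonneg w) hw_norm)
    intro m
    rw [norm_mul, norm_pow]
    calc ‖((chi12 (m + 1) : ℤ) : ℂ)‖ * ‖w‖ ^ ((m + 1) ^ 2)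
        ≤ 1 * ‖w‖ ^ ((m + 1) ^ 2) := by
          apply mul_le_mul_of_nonneg_right (chi12_norm_le _) (by positivity)
      _ = ‖w‖ ^ ((m + 1) ^ 2) := one_mul _
      _ ≤ ‖w‖ ^ m := pow_le_pow_of_le_one (norm_nonneg w) hw_norm.le (by nlinarith)
  -- two limits of the same sequence
  have h62 : Tendsto (fun n : ℕ => 6 * n + 2) atTop atTop :=
    tendsto_atTop.mpr fun b => eventually_atTop.mpr ⟨b, fun n hn => by omega⟩
  have h1 : Tendsto (fun n : ℕ => ∑ m ∈ range (6 * n + 2),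
      ((chi12 (m + 1) : ℤ) : ℂ) * w ^ ((m + 1) ^ 2)) atTop
      (𝓝 (∑' m : ℕ, ((chi12 (m + 1) : ℤ) : ℂ) * w ^ ((m + 1) ^ 2))) := by
    have := hF.hasSum.tendsto_sum_nat.comp h62
    simpa [Function.comp_def] using this
  have h2 : Tendsto (fun n : ℕ => ∑ m ∈ range (6 * n + 2),
      ((chi12 (m + 1) : ℤ) : ℂ) * w ^ ((m + 1) ^ 2)) atTop
      (𝓝 (w * ∏' j : ℕ, (1 - (w ^ 24) ^ (j + 1)))) := by
    have := (pentagonal_tendsto hx_norm).const_mul w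
    exact this.congr fun n => (finite_reindex w n).symm
  exact tendsto_nhds_unique h2 h1
end

section
/- For x with Re(x) > 0 and every natural number n, x^{−n−1} = ∫_0^∞ e^{−px} pⁿ/n! dp; consequently, if F(x) = ∑ a_n x^{−n} is analytic at x = ∞ (i.e. has positive radius of convergence in 1/x), then a_0 + ∫_0^∞ e^{−px} (BF)(p) dp = F(x) for Re(x) sufficiently large, where BF(p) = ∑_{n≥0} a_{n+1} pⁿ/n!. -/
open Complex MeasureTheory

section BorelAux
open Set Filter


-- real tendsto: p^n * exp(-b p) → 0
lemma aux_tendsto_pow_exp {b : ℝ} (hb : 0 < b) (n : ℕ) :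
    Tendsto (fun p : ℝ => p ^ n * Real.exp (-(b * p))) atTop (nhds 0) := by
  have h := (Real.tendsto_pow_mul_exp_neg_atTop_nhds_zero n).comp
    (tendsto_id.const_mul_atTop hb)
  have := h.const_mul (1 / b ^ n)
  rw [mul_zero] at this
  refine this.congr fun p => ?_
  simp only [Function.comp, id]
  rw [mul_pow]
  field_simp

-- real integrability
lemma aux_int_real {b : ℝ} (hb : 0 < b) (n : ℕ) :
    IntegrableOn (fun p : ℝ => Real.exp (-(b * p)) * p ^ n) (Ioi 0) := by
  apply integrable_of_isBigO_exp_neg (half_pos hb)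
  · fun_prop
  · rw [Asymptotics.isBigO_iff]
    refine ⟨1, ?_⟩
    have h := aux_tendsto_pow_exp (half_pos hb) n
    filter_upwards [h.eventually (eventually_le_nhds one_pos), eventually_ge_atTop (0:ℝ)]
      with p hp hp0
    have heq : Real.exp (-(b * p)) * p ^ n
        = (p ^ n * Real.exp (-(b/2 * p))) * Real.exp (-(b/2) * p) := by
      rw [mul_comm, mul_assoc, ← Real.exp_add]
      ring_nf
    rw [Real.norm_of_nonneg (by positivity), Real.norm_of_nonneg (Real.exp_pos _).le, heq]
    exact mul_le_mul_of_nonneg_right (by simpa using hp) (Real.exp_pos _).le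

lemma aux_norm (x : ℂ) (p : ℝ) (hp : 0 ≤ p) (n : ℕ) :
    ‖Complex.exp (-(p:ℂ) * x) * (p:ℂ) ^ n‖ = Real.exp (-(x.re * p)) * p ^ n := by
  rw [norm_mul, norm_pow, Complex.norm_exp,
    Complex.norm_real, Real.norm_of_nonneg hp]
  congr 2
  simp [Complex.mul_re]
  ring

-- complex integrability
lemma aux_int {x : ℂ} (hx : 0 < x.re) (n : ℕ) :
    IntegrableOn (fun p : ℝ => Complex.exp (-(p:ℂ) * x) * (p:ℂ) ^ n) (Ioi 0) := by
  refine (aux_int_real hx n).mono' (Continuous.aestronglyMeasurable (by fun_prop)) ?_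
  filter_upwards [ae_restrict_mem measurableSet_Ioi] with p hp
  rw [aux_norm x p (le_of_lt hp)]

-- derivative helpers
lemma aux_deriv_exp (x : ℂ) (p : ℝ) :
    HasDerivAt (fun q : ℝ => Complex.exp (-(q:ℂ) * x)) (-x * Complex.exp (-(p:ℂ) * x)) p := by
  have h : HasDerivAt (fun z : ℂ => Complex.exp (-z * x)) (-x * Complex.exp (-(p:ℂ) * x)) (p:ℂ) := by
    have h1 : HasDerivAt (fun z : ℂ => -z * x) (-x) (p:ℂ) := by
      simpa using ((hasDerivAt_id ((p:ℝ):ℂ)).neg.mul_const x)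
    simpa [mul_comm] using h1.cexp
  exact h.comp_ofReal

lemma aux_deriv_pow (p : ℝ) (n : ℕ) :
    HasDerivAt (fun q : ℝ => ((q:ℂ)) ^ n) ((n:ℂ) * (p:ℂ) ^ (n - 1)) p :=
  (hasDerivAt_pow n ((p:ℝ):ℂ)).comp_ofReal

lemma aux_tendsto_zero {x : ℂ} (hx : 0 < x.re) (n : ℕ) :
    Tendsto (fun p : ℝ => -Complex.exp (-(p:ℂ) * x) * (p:ℂ) ^ n / x) atTop (nhds 0) := by
  rw [tendsto_zero_iff_norm_tendsto_zero]
  have h := ((aux_tendsto_pow_exp hx n).const_mul (1 / ‖x‖))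
  rw [mul_zero] at h
  apply squeeze_zero_norm' _ h
  filter_upwards [eventually_ge_atTop (0:ℝ)] with p hp
  rw [norm_norm, norm_div, neg_mul, norm_neg, aux_norm x p hp n, div_eq_mul_inv]
  apply le_of_eq
  ring

-- the key integral
lemma aux_key {x : ℂ} (hx : 0 < x.re) : ∀ n : ℕ,
    ∫ p in Ioi (0:ℝ), Complex.exp (-(p:ℂ) * x) * (p:ℂ) ^ n
      = (Nat.factorial n : ℂ) / x ^ (n + 1) := by
  have hx0 : x ≠ 0 := fun h => by simp [h] at hx
  intro n
  induction n with
  | zero =>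
    have htend : Tendsto (fun p : ℝ => -Complex.exp (-(p:ℂ) * x) / x) atTop (nhds 0) := by
      have h := aux_tendsto_zero hx 0
      simpa using h
    have hder : ∀ p : ℝ, p ∈ Ioi (0:ℝ) → HasDerivAt (fun q : ℝ => -Complex.exp (-(q:ℂ) * x) / x)
        (Complex.exp (-(p:ℂ) * x) * (p:ℂ) ^ 0) p := by
      intro p _
      have h := ((aux_deriv_exp x p).neg).div_const x
      refine h.congr_deriv ?_
      field_simp
    have := integral_Ioi_of_hasDerivAt_of_tendsto
      (Continuous.continuousWithinAt (by fun_prop)) hder (aux_int hx 0) htend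
    rw [this]
    simp only [Complex.ofReal_zero, neg_zero, zero_mul, Complex.exp_zero, pow_one,
      Nat.factorial_zero, Nat.cast_one, zero_sub, neg_neg]
    field_simp
    ring
  | succ n ih =>
    have hder : ∀ p : ℝ, HasDerivAt (fun q : ℝ => -Complex.exp (-(q:ℂ) * x) * (q:ℂ) ^ (n+1) / x)
        (Complex.exp (-(p:ℂ) * x) * (p:ℂ) ^ (n+1)
          - ((n:ℂ)+1) / x * (Complex.exp (-(p:ℂ) * x) * (p:ℂ) ^ n)) p := by
      intro p
      have h := (((aux_deriv_exp x p).neg).mul (aux_deriv_pow p (n+1))).div_const x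
      refine h.congr_deriv ?_
      simp only [Pi.neg_apply]
      push_cast
      field_simp
      ring
    have hint : IntegrableOn (fun p : ℝ => Complex.exp (-(p:ℂ) * x) * (p:ℂ) ^ (n+1)
        - ((n:ℂ)+1) / x * (Complex.exp (-(p:ℂ) * x) * (p:ℂ) ^ n)) (Ioi 0) :=
      (aux_int hx (n+1)).sub ((aux_int hx n).const_mul _)
    have heq := integral_Ioi_of_hasDerivAt_of_tendsto
      (Continuous.continuousWithinAt (by fun_prop))
      (fun p _ => hder p) hint (aux_tendsto_zero hx (n+1))
    rw [integral_sub (aux_int hx (n+1)) ((aux_int hx n).const_mul _)] at heq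
    rw [integral_const_mul, ih] at heq
    have h0 : -Complex.exp (-((0:ℝ):ℂ) * x) * ((0:ℝ):ℂ) ^ (n+1) / x = 0 := by simp
    rw [h0, sub_zero] at heq
    have hfin : (∫ p in Ioi (0:ℝ), Complex.exp (-(p:ℂ) * x) * (p:ℂ) ^ (n+1))
        = ((n:ℂ)+1) / x * ((Nat.factorial n : ℂ) / x ^ (n+1)) := by
      linear_combination heq
    rw [hfin, div_mul_div_comm, ← pow_succ', Nat.factorial_succ]
    push_cast
    ring_nf

lemma aux_key_real {b : ℝ} (hb : 0 < b) (n : ℕ) :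
    ∫ p in Ioi (0:ℝ), Real.exp (-(b * p)) * p ^ n = (Nat.factorial n : ℝ) / b ^ (n + 1) := by
  have h := aux_key (x := (b:ℂ)) (by simpa using hb) n
  have heq : ∀ p : ℝ, Complex.exp (-(p:ℂ) * (b:ℂ)) * (p:ℂ) ^ n
      = ((Real.exp (-(b * p)) * p ^ n : ℝ) : ℂ) := by
    intro p
    have h1 : ((-(b*p) : ℝ) : ℂ) = -(p:ℂ) * (b:ℂ) := by push_cast; ring
    rw [← h1, ← Complex.ofReal_exp]
    push_cast
    ring
  rw [MeasureTheory.setIntegral_congr_fun measurableSet_Ioi (fun p _ => heq p)] at h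
  have h2 : (∫ p in Ioi (0:ℝ), ((Real.exp (-(b*p)) * p^n : ℝ) : ℂ))
      = ((∫ p in Ioi (0:ℝ), Real.exp (-(b*p)) * p^n : ℝ) : ℂ) := integral_ofReal
  rw [h2] at h
  apply Complex.ofReal_injective
  rw [h]
  push_cast
  ring

end BorelAux

open Set Filter in
theorem borel_sum_of_convergent (a : ℕ → ℂ) (C r : ℝ) (hC : 0 ≤ C) (hr : 0 < r)
    (ha : ∀ n : ℕ, ‖a n‖ ≤ C * r ^ n) :
    (∀ x : ℂ, 0 < x.re → ∀ n : ℕ,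
      ∫ p in Set.Ioi (0 : ℝ),
          Complex.exp (-(p : ℂ) * x) * (p : ℂ) ^ n / (Nat.factorial n : ℂ)
        = x ^ (-(n : ℤ) - 1)) ∧
    (∃ R : ℝ, ∀ x : ℂ, R < x.re →
      a 0 + ∫ p in Set.Ioi (0 : ℝ),
          Complex.exp (-(p : ℂ) * x) *
            (∑' n : ℕ, a (n + 1) * (p : ℂ) ^ n / (Nat.factorial n : ℂ))
        = ∑' n : ℕ, a n / x ^ n) := by
  constructor
  · intro x hx n
    have hx0 : x ≠ 0 := fun h => by simp [h] at hx
    rw [MeasureTheory.integral_div, aux_key hx n]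
    have hfac : ((Nat.factorial n : ℂ)) ≠ 0 := by exact_mod_cast (Nat.factorial_pos n).ne'
    have hexp : (-(n:ℤ) - 1) = -((n+1 : ℕ) : ℤ) := by push_cast; ring
    rw [hexp, zpow_neg, zpow_natCast]
    field_simp
  · refine ⟨r, fun x hx => ?_⟩
    have hxre : 0 < x.re := hr.trans hx
    have hx0 : x ≠ 0 := fun h => by simp [h] at hxre
    set f : ℕ → ℝ → ℂ :=
      fun n p => Complex.exp (-(p:ℂ)*x) * (a (n+1) * (p:ℂ)^n / (Nat.factorial n : ℂ)) with hf
    have hfeq : ∀ n, f n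
        = fun p : ℝ => (a (n+1) / (Nat.factorial n : ℂ)) * (Complex.exp (-(p:ℂ)*x) * (p:ℂ)^n) := by
      intro n; funext p; simp only [hf]; ring
    have hint : ∀ n, Integrable (f n) (volume.restrict (Set.Ioi (0:ℝ))) := by
      intro n; rw [hfeq n]; exact ((aux_int hxre n).const_mul _)
    have hfacne : ∀ n : ℕ, ((Nat.factorial n : ℝ)) ≠ 0 :=
      fun n => by exact_mod_cast (Nat.factorial_pos n).ne'
    have hnormval : ∀ n, (∫ p in Set.Ioi (0:ℝ), ‖f n p‖) = ‖a (n+1)‖ / x.re ^ (n+1) := by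
      intro n
      have hn : ∀ p ∈ Set.Ioi (0:ℝ), ‖f n p‖
          = (‖a (n+1)‖ / (Nat.factorial n : ℝ)) * (Real.exp (-(x.re * p)) * p ^ n) := by
        intro p hp
        have : f n p = (a (n+1) / (Nat.factorial n : ℂ)) * (Complex.exp (-(p:ℂ)*x) * (p:ℂ)^n) := by
          simp only [hf]; ring
        rw [this, norm_mul, norm_div, aux_norm x p (le_of_lt hp) n]
        norm_num
      rw [MeasureTheory.setIntegral_congr_fun measurableSet_Ioi hn, integral_const_mul,
        aux_key_real hxre n]
      field_simp
    have hlt : r / x.re < 1 := (div_lt_one hxre).mpr hx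
    have hsummable : Summable (fun n => ∫ p in Set.Ioi (0:ℝ), ‖f n p‖) := by
      apply Summable.congr _ (fun n => (hnormval n).symm)
      apply Summable.of_nonneg_of_le (fun n => by positivity)
        (fun n => ?_) ((summable_geometric_of_lt_one (by positivity) hlt).mul_left (C * (r/x.re)))
      calc ‖a (n+1)‖ / x.re ^ (n+1) ≤ (C * r ^ (n+1)) / x.re ^ (n+1) := by
            gcongr
            exact ha (n+1)
        _ = C * (r/x.re) * (r/x.re)^n := by
            rw [div_pow]
            field_simp
            ring
    have hs := hasSum_integral_of_summable_integral_norm hint hsummable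
    have hIval : ∀ n, (∫ p in Set.Ioi (0:ℝ), f n p) = a (n+1) / x^(n+1) := by
      intro n
      have hfac : ((Nat.factorial n : ℂ)) ≠ 0 := by exact_mod_cast (Nat.factorial_pos n).ne'
      rw [hfeq n, integral_const_mul, aux_key hxre n]
      field_simp
    have hinteq : (∫ p in Set.Ioi (0:ℝ), ∑' n, f n p)
        = ∫ p in Set.Ioi (0:ℝ), Complex.exp (-(p:ℂ) * x) *
            (∑' n : ℕ, a (n + 1) * (p:ℂ) ^ n / (Nat.factorial n : ℂ)) := by
      refine MeasureTheory.setIntegral_congr_fun measurableSet_Ioi (fun p _ => ?_)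
      simp only [hf]
      exact tsum_mul_left
    have hsum2 : Summable (fun n => a n / x^n) := by
      apply Summable.of_norm
      apply Summable.of_nonneg_of_le (fun n => norm_nonneg _)
        (fun n => ?_) ((summable_geometric_of_lt_one (by positivity) hlt).mul_left C)
      rw [norm_div, norm_pow]
      calc ‖a n‖ / ‖x‖ ^ n ≤ (C * r ^ n) / x.re ^ n := by
            have hxle : x.re ≤ ‖x‖ := by
              exact Complex.re_le_norm x
            exact div_le_div₀ (by positivity) (ha n) (by positivity)
              (pow_le_pow_left₀ hxre.le hxle n)
        _ = C * (r/x.re)^n := by rw [div_pow]; ring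
    have htsum := hs.tsum_eq
    rw [hinteq] at htsum
    rw [← htsum, tsum_congr hIval, Summable.tsum_eq_zero_add hsum2]
    simp
end
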